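/- Let δ be a real number with 0 < δ < 1/2, let k be an integer, set z₁ = (1+δ)^k, and let z₂ ≥ 0 be real. Let a = z₁ + z₂ and let p = log_{(1+δ)}(a) − ⌊log_{(1+δ)}(a)⌋ be the fractional part of log_{(1+δ)}(a). Then z₂ ≥ (1/2)·δ·p·z₁. -/

import Mathlib

/-!
Write `L = log_{1+δ} a`. Since `(1+δ)^k = z₁ ≤ a`, we have `k ≤ ⌊L⌋`, so
`z₁ (1+δ)^p = (1+δ)^(k+p) ≤ (1+δ)^(⌊L⌋+p) = a`. On the other hand
`(1+δ)^p = exp (p log(1+δ)) ≥ 1 + p log(1+δ) ≥ 1 + p δ/2`, as `log(1+δ) ≥ δ/(1+δ) ≥ δ/2` for `δ ≤ 1`.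
Hence `z₁ (1 + p δ/2) ≤ a = z₁ + z₂`.
-/

open Real

lemma half_le_log_one_add {x : ℝ} (hx0 : 0 ≤ x) (hx1 : x ≤ 1) : x / 2 ≤ log (1 + x) := by
  have hpos : 0 < 1 + x := by linarith
  calc x / 2 ≤ x / (1 + x) := div_le_div_of_nonneg_left hx0 hpos (by linarith)
    _ = 1 - (1 + x)⁻¹ := by field_simp; ring
    _ ≤ log (1 + x) := one_sub_inv_le_log_of_pos hpos

lemma one_add_mul_log_le_rpow {b : ℝ} (hb : 0 < b) (y : ℝ) : 1 + y * log b ≤ b ^ y := by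
  rw [rpow_def_of_pos hb, mul_comm (log b), add_comm]
  exact add_one_le_exp _

lemma one_add_mul_half_le_rpow_one_add {x y : ℝ} (hx0 : 0 ≤ x) (hx1 : x ≤ 1) (hy : 0 ≤ y) :
    1 + y * (x / 2) ≤ (1 + x) ^ y :=
  calc 1 + y * (x / 2) ≤ 1 + y * log (1 + x) := by
        gcongr; exact half_le_log_one_add hx0 hx1
    _ ≤ (1 + x) ^ y := one_add_mul_log_le_rpow (by linarith) y

lemma zpow_mul_rpow_fract_logb_le {b a : ℝ} (hb : 1 < b) {k : ℤ} (hk : b ^ k ≤ a) :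
    b ^ k * b ^ Int.fract (logb b a) ≤ a := by
  have hb0 : 0 < b := by linarith
  have ha : 0 < a := lt_of_lt_of_le (zpow_pos hb0 k) hk
  have hk_le_floor : (k : ℝ) ≤ ⌊logb b a⌋ := by
    have : (k : ℝ) ≤ logb b a := (le_logb_iff_rpow_le hb ha).2 (by rwa [rpow_intCast])
    exact_mod_cast Int.le_floor.2 this
  calc b ^ k * b ^ Int.fract (logb b a) = b ^ ((k : ℝ) + Int.fract (logb b a)) := by
        rw [rpow_add hb0, rpow_intCast]
    _ ≤ b ^ ((⌊logb b a⌋ : ℝ) + Int.fract (logb b a)) := by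
        gcongr
        exact hb.le
    _ = a := by rw [Int.floor_add_fract, rpow_logb hb0 hb.ne' ha]

theorem y2big (δ : ℝ) (hδ0 : 0 < δ) (hδ : δ < 1/2) (k : ℤ)
    (z₁ z₂ : ℝ) (hz₁ : z₁ = (1 + δ) ^ k) (hz₂ : 0 ≤ z₂)
    (a p : ℝ) (ha : a = z₁ + z₂)
    (hp : p = Real.logb (1 + δ) a - ⌊Real.logb (1 + δ) a⌋) :
    (1/2) * δ * p * z₁ ≤ z₂ := by
  rw [Int.self_sub_floor] at hp
  have hz₁_pos : 0 < z₁ := hz₁ ▸ zpow_pos (by linarith) k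
  have hpow_le : z₁ * (1 + δ) ^ p ≤ a := by
    rw [hz₁, hp]
    exact zpow_mul_rpow_fract_logb_le (by linarith) (by linarith [hz₁])
  have hgrowth : 1 + p * (δ / 2) ≤ (1 + δ) ^ p :=
    one_add_mul_half_le_rpow_one_add hδ0.le (by linarith) (hp ▸ Int.fract_nonneg _)
  linarith [mul_le_mul_of_nonneg_left hgrowth hz₁_pos.le]
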